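/- arXiv:0810.2766 — 4 statements merged into one kernel-verified Lean document; each statement's English description precedes it below -/
import Mathlib

section
/- Let K be a field and let P, Q, R ∈ K[x] be polynomials without a common factor (their gcd is a unit). Then the K[x]-module Z = {(p,q,r) ∈ K[x]³ : pP + qQ + rR = 0} of syzygies between P, Q, R is a free K[x]-module of rank 2. -/
/-! Since `P, Q, R` have no common factor and `K[X]` is a principal ideal domain, they generate the
unit ideal, so the linear form `(p, q, r) ↦ p P + q Q + r R` on `K[X]³` is surjective. Its kernel,
the syzygy module, is a submodule of a free module over a PID, hence free, and rank-nullity gives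
its rank as `3 - 1 = 2`. -/

open Polynomial

/-- The module of syzygies between three univariate polynomials `P, Q, R`:
triples `(p, q, r)` with `p*P + q*Q + r*R = 0`, as a submodule of `(K[x])³`. -/
noncomputable def syzygyModule {K : Type*} [Field K] (P Q R : K[X]) :
    Submodule K[X] (Fin 3 → K[X]) :=
  LinearMap.ker
    (P • (LinearMap.proj 0 : (Fin 3 → K[X]) →ₗ[K[X]] K[X])
      + Q • (LinearMap.proj 1 : (Fin 3 → K[X]) →ₗ[K[X]] K[X])
      + R • (LinearMap.proj 2 : (Fin 3 → K[X]) →ₗ[K[X]] K[X]))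

theorem Ideal.span_eq_top_of_forall_dvd_isUnit {A : Type*} [CommRing A] [IsPrincipalIdealRing A]
    {s : Set A} (h : ∀ d : A, (∀ x ∈ s, d ∣ x) → IsUnit d) : Ideal.span s = ⊤ := by
  obtain ⟨g, hg⟩ := Submodule.IsPrincipal.principal (Ideal.span s)
  rw [hg, Ideal.submodule_span_eq, Ideal.span_singleton_eq_top]
  refine h g fun x hx => ?_
  rw [← Ideal.mem_span_singleton, ← Ideal.submodule_span_eq, ← hg]
  exact Ideal.subset_span hx

theorem LinearMap.nonempty_basis_ker_of_surjective {A M : Type*} [CommRing A] [IsDomain A]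
    [IsPrincipalIdealRing A] [AddCommGroup M] [Module A M] [Module.Free A M] [Module.Finite A M]
    {n : ℕ} (hM : Module.finrank A M = n + 1) {f : M →ₗ[A] A} (hf : Function.Surjective f) :
    Nonempty (Module.Basis (Fin n) A (LinearMap.ker f)) := by
  have rank_nullity := (LinearMap.ker f).finrank_quotient_add_finrank
  rw [(f.quotKerEquivOfSurjective hf).finrank_eq, Module.finrank_self, hM] at rank_nullity
  exact ⟨Module.finBasisOfFinrankEq A _ (by omega)⟩

noncomputable def syzygyForm {A : Type*} [CommRing A] (a b c : A) : (Fin 3 → A) →ₗ[A] A :=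
  a • LinearMap.proj 0 + b • LinearMap.proj 1 + c • LinearMap.proj 2

@[simp]
theorem syzygyForm_apply {A : Type*} [CommRing A] (a b c : A) (v : Fin 3 → A) :
    syzygyForm a b c v = a * v 0 + b * v 1 + c * v 2 := by
  simp [syzygyForm]

theorem syzygyModule_eq_ker {K : Type*} [Field K] (P Q R : K[X]) :
    syzygyModule P Q R = LinearMap.ker (syzygyForm P Q R) :=
  rfl

theorem syzygyForm_surjective {A : Type*} [CommRing A] [IsPrincipalIdealRing A] {a b c : A}
    (hcop : ∀ d : A, d ∣ a → d ∣ b → d ∣ c → IsUnit d) : Function.Surjective (syzygyForm a b c) := by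
  have hspan : Ideal.span {a, b, c} = ⊤ :=
    Ideal.span_eq_top_of_forall_dvd_isUnit fun d hd =>
      hcop d (hd a (by simp)) (hd b (by simp)) (hd c (by simp))
  rw [← LinearMap.range_eq_top, eq_top_iff, ← hspan, Ideal.span_le]
  rintro x (rfl | rfl | rfl)
  · exact ⟨Pi.single 0 1, by simp⟩
  · exact ⟨Pi.single 1 1, by simp⟩
  · exact ⟨Pi.single 2 1, by simp⟩

theorem syzygyModule_free_rank_two {K : Type*} [Field K] (P Q R : K[X])
    (hcop : ∀ d : K[X], d ∣ P → d ∣ Q → d ∣ R → IsUnit d) :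
    Nonempty (Module.Basis (Fin 2) K[X] (syzygyModule P Q R)) := by
  rw [syzygyModule_eq_ker]
  exact LinearMap.nonempty_basis_ker_of_surjective (by simp) (syzygyForm_surjective hcop)
end

section
/- Let K be a field and P, Q, R ∈ K[x] with no common factor. If (p₁,q₁,r₁) and (p₂,q₂,r₂) are two syzygies between P, Q, R (i.e., pᵢP + qᵢQ + rᵢR = 0 for i = 1,2), then the cross-product vector (q₁r₂ − q₂r₁, p₂r₁ − p₁r₂, p₁q₂ − p₂q₁) is a K[x]-multiple of (P, Q, R). -/
/-!
The two syzygies are vectors orthogonal to `v = (P, Q, R)`, so the expansion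
`(s₁ × s₂) × v = (s₁ ⬝ v) s₂ - (s₂ ⬝ v) s₁` shows that `w = s₁ × s₂` satisfies `w × v = 0`.
Since `K[X]` is a principal ideal domain and `P, Q, R` have no common factor, Bézout gives `u`
with `u ⬝ v = 1`; the other expansion `u × (w × v) = (u ⬝ v) w - (w ⬝ u) v` then yields
`w = (u ⬝ w) v`.
-/

open Polynomial Matrix

theorem IsBezout.exists_dotProduct_eq_one {R ι : Type*} [CommRing R] [IsBezout R] [Fintype ι]
    {v : ι → R} (hv : ∀ d : R, (∀ i, d ∣ v i) → IsUnit d) :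
    ∃ u : ι → R, u ⬝ᵥ v = 1 := by
  obtain ⟨d, hd⟩ := (IsBezout.isPrincipal_of_FG (Ideal.span (Set.range v))
    ⟨(Set.finite_range v).toFinset, by simp⟩).principal
  rw [Ideal.submodule_span_eq] at hd
  have hunit : IsUnit d := hv d fun i ↦
    Ideal.mem_span_singleton.mp (hd ▸ Ideal.subset_span (Set.mem_range_self i))
  rw [← Ideal.span_singleton_eq_top, ← hd] at hunit
  exact Ideal.mem_span_range_iff_exists_fun.mp (hunit ▸ Submodule.mem_top)

section CrossProduct

variable {R : Type*} [CommRing R]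

theorem eq_dotProduct_smul_of_cross_eq_zero {u v w : Fin 3 → R} (hu : u ⬝ᵥ v = 1)
    (h : w ⨯₃ v = 0) : w = (u ⬝ᵥ w) • v := by
  have expand := cross_cross_eq_smul_sub_smul' u w v
  rwa [h, map_zero, hu, one_smul, dotProduct_comm w u, eq_comm, sub_eq_zero] at expand

theorem cross_cross_eq_zero_of_dotProduct_eq_zero {s₁ s₂ v : Fin 3 → R}
    (h₁ : s₁ ⬝ᵥ v = 0) (h₂ : s₂ ⬝ᵥ v = 0) : s₁ ⨯₃ s₂ ⨯₃ v = 0 := by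
  rw [cross_cross_eq_smul_sub_smul, h₁, h₂, zero_smul, zero_smul, sub_zero]

theorem exists_cross_eq_smul_of_dotProduct_eq_zero [IsBezout R] {s₁ s₂ v : Fin 3 → R}
    (hv : ∀ d : R, (∀ i, d ∣ v i) → IsUnit d) (h₁ : s₁ ⬝ᵥ v = 0) (h₂ : s₂ ⬝ᵥ v = 0) :
    ∃ f : R, s₁ ⨯₃ s₂ = f • v := by
  obtain ⟨u, hu⟩ := IsBezout.exists_dotProduct_eq_one hv
  exact ⟨_, eq_dotProduct_smul_of_cross_eq_zero hu
    (cross_cross_eq_zero_of_dotProduct_eq_zero h₁ h₂)⟩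

end CrossProduct

theorem cross_product_of_syzygies_is_multiple {K : Type*} [Field K]
    (P Q R p₁ q₁ r₁ p₂ q₂ r₂ : K[X])
    (hcop : ∀ d : K[X], d ∣ P → d ∣ Q → d ∣ R → IsUnit d)
    (h₁ : p₁ * P + q₁ * Q + r₁ * R = 0)
    (h₂ : p₂ * P + q₂ * Q + r₂ * R = 0) :
    ∃ f : K[X],
      q₁ * r₂ - q₂ * r₁ = f * P ∧
      p₂ * r₁ - p₁ * r₂ = f * Q ∧
      p₁ * q₂ - p₂ * q₁ = f * R := by
  obtain ⟨f, hf⟩ := exists_cross_eq_smul_of_dotProduct_eq_zero (s₁ := ![p₁, q₁, r₁])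
    (s₂ := ![p₂, q₂, r₂]) (v := ![P, Q, R])
    (fun d hd ↦ hcop d (hd 0) (hd 1) (hd 2))
    (by rwa [vec3_dotProduct]) (by rwa [vec3_dotProduct])
  simp only [cross_apply, smul_vec3, smul_eq_mul, cons_val, vecCons_inj, and_true] at hf
  obtain ⟨hP, hQ, hR⟩ := hf
  exact ⟨f, by linear_combination hP, by linear_combination hQ, by linear_combination hR⟩
end

section
/- Let K be a field and P, Q, R ∈ K[x] with no common factor. Two syzygies u₁ = (p₁,q₁,r₁) and u₂ = (p₂,q₂,r₂) between P, Q, R form a basis of the syzygy module if and only if the cross product (q₁r₂ − q₂r₁, p₂r₁ − p₁r₂, p₁q₂ − p₂q₁) is a nonzero K-scalar multiple of (P, Q, R). -/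
/-
Write `w = (P, Q, R)`. Coprimality gives `a` with `a ⬝ᵥ w = 1`, and syzygies are the vectors
orthogonal to `w`; by the vector triple product, the cross product of two syzygies is then a
multiple of `w`. If `u × v = c • w` with `c` a unit, every syzygy `z` equals `w × (z × a)`, so
`c • z = (u × v) × (z × a)` lies in the span of `u, v`, and crossing a relation `s • u + t • v = 0`
with `u` or `v` gives independence. Conversely, if `u, v` is a basis and `u × v = d • w`, the
cross product of the Koszul syzygies `w × y₁, w × y₂` is `(w ⬝ᵥ y₁ × y₂) • w` and also a multiple
of `d • w`, so `d` divides every coordinate of `w`, hence divides `a ⬝ᵥ w = 1`.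
-/

open Polynomial

open Matrix

theorem exists_dotProduct_eq_one_of_forall_dvd_imp_isUnit {A ι : Type*} [CommRing A]
    [IsPrincipalIdealRing A] [Fintype ι] {w : ι → A} (hw : ∀ d, (∀ i, d ∣ w i) → IsUnit d) :
    ∃ a : ι → A, a ⬝ᵥ w = 1 := by
  open Submodule.IsPrincipal in
  set I := Ideal.span (Set.range w)
  have hgen : ∀ i, generator I ∣ w i := fun i =>
    (mem_iff_generator_dvd I).mp (Ideal.subset_span (Set.mem_range_self i))
  have hI : I = ⊤ := by
    rw [← span_singleton_generator I, Ideal.span_singleton_eq_top]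
    exact hw _ hgen
  exact Ideal.mem_span_range_iff_exists_fun.mp (show (1 : A) ∈ I by rw [hI]; trivial)

section CrossProduct

variable {A : Type*} [CommRing A] {a w : Fin 3 → A}

theorem eq_zero_of_smul_eq_zero_of_dotProduct_eq_one (ha : a ⬝ᵥ w = 1) {s : A}
    (h : s • w = 0) : s = 0 := by
  simpa [dotProduct_smul, ha] using congrArg (a ⬝ᵥ ·) h

theorem eq_dotProduct_smul_of_cross_eq_zero_s5 (ha : a ⬝ᵥ w = 1) {x : Fin 3 → A}
    (h : x ⨯₃ w = 0) : x = (x ⬝ᵥ a) • w := by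
  have := cross_cross_eq_smul_sub_smul' a x w
  rwa [h, map_zero, ha, one_smul, eq_comm, sub_eq_zero] at this

theorem cross_eq_smul_of_dotProduct_eq_zero (ha : a ⬝ᵥ w = 1) {u v : Fin 3 → A}
    (hu : w ⬝ᵥ u = 0) (hv : w ⬝ᵥ v = 0) : u ⨯₃ v = (u ⨯₃ v ⬝ᵥ a) • w := by
  apply eq_dotProduct_smul_of_cross_eq_zero_s5 ha
  rw [cross_cross_eq_smul_sub_smul, dotProduct_comm u, dotProduct_comm v, hu, hv,
    zero_smul, zero_smul, sub_zero]

theorem linearIndependent_pair_of_cross_eq_smul (ha : a ⬝ᵥ w = 1) {u v : Fin 3 → A} {c : A}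
    (hc : IsUnit c) (h : u ⨯₃ v = c • w) : LinearIndependent A ![u, v] := by
  refine LinearIndependent.pair_iff.mpr fun s t hst => ⟨?_, ?_⟩
  · have : (s * c) • w = 0 := by
      simpa [cross_self, h, mul_smul] using congrArg (· ⨯₃ v) hst
    exact hc.mul_left_eq_zero.mp (eq_zero_of_smul_eq_zero_of_dotProduct_eq_one ha this)
  · have : (t * c) • w = 0 := by
      simpa [cross_self, h, mul_smul] using congrArg (u ⨯₃ ·) hst
    exact hc.mul_left_eq_zero.mp (eq_zero_of_smul_eq_zero_of_dotProduct_eq_one ha this)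

theorem mem_span_pair_of_cross_eq_smul (ha : a ⬝ᵥ w = 1) {u v z : Fin 3 → A} {c : A}
    (hc : IsUnit c) (h : u ⨯₃ v = c • w) (hz : w ⬝ᵥ z = 0) :
    z ∈ Submodule.span A {u, v} := by
  have hz' : w ⨯₃ (z ⨯₃ a) = z := by
    rw [cross_cross_eq_smul_sub_smul', dotProduct_comm z, hz, dotProduct_comm, ha, one_smul,
      zero_smul, sub_zero]
  have hcz : c • z = (u ⬝ᵥ z ⨯₃ a) • v - (v ⬝ᵥ z ⨯₃ a) • u := by
    rw [← cross_cross_eq_smul_sub_smul, h, map_smul, LinearMap.smul_apply, hz']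
  rw [← Submodule.smul_mem_iff_of_isUnit _ hc, hcz]
  exact Submodule.sub_mem _ (Submodule.smul_mem _ _ (Submodule.mem_span_of_mem (by simp)))
    (Submodule.smul_mem _ _ (Submodule.subset_span (by simp)))

theorem cross_eq_smul_cross_basis {Z : Submodule A (Fin 3 → A)} (b : Module.Basis (Fin 2) A Z)
    (z₁ z₂ : Z) :
    (z₁ : Fin 3 → A) ⨯₃ z₂ = (b.repr z₁ 0 * b.repr z₂ 1 - b.repr z₁ 1 * b.repr z₂ 0) •
      ((b 0 : Fin 3 → A) ⨯₃ b 1) := by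
  conv_lhs => rw [← b.sum_repr z₁, ← b.sum_repr z₂]
  simp only [Fin.sum_univ_two, Submodule.coe_add, Submodule.coe_smul, map_add, map_smul,
    LinearMap.add_apply, LinearMap.smul_apply, cross_self,
    ← cross_anticomm (b 0 : Fin 3 → A) (b 1)]
  module

theorem dvd_dotProduct_cross_of_basis {Z : Submodule A (Fin 3 → A)}
    (hZ : ∀ z, z ∈ Z ↔ w ⬝ᵥ z = 0) (ha : a ⬝ᵥ w = 1) (b : Module.Basis (Fin 2) A Z)
    (y₁ y₂ : Fin 3 → A) : ((b 0 : Fin 3 → A) ⨯₃ b 1 ⬝ᵥ a) ∣ w ⬝ᵥ y₁ ⨯₃ y₂ := by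
  let z₁ : Z := ⟨w ⨯₃ y₁, (hZ _).mpr (dot_self_cross w y₁)⟩
  let z₂ : Z := ⟨w ⨯₃ y₂, (hZ _).mpr (dot_self_cross w y₂)⟩
  have hkoszul : (z₁ : Fin 3 → A) ⨯₃ z₂ ⬝ᵥ a = w ⬝ᵥ y₁ ⨯₃ y₂ := by
    rw [cross_cross_eq_smul_sub_smul', dot_self_cross, zero_smul, sub_zero, smul_dotProduct,
      dotProduct_comm w, ha, smul_eq_mul, mul_one]
    exact (dotProduct_comm _ _).trans (triple_product_permutation y₂ w y₁)
  rw [← hkoszul, cross_eq_smul_cross_basis b z₁ z₂, smul_dotProduct, smul_eq_mul]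
  exact dvd_mul_left _ _

theorem isUnit_of_forall_dvd_dotProduct_cross (ha : a ⬝ᵥ w = 1) {d : A}
    (hd : ∀ y₁ y₂, d ∣ w ⬝ᵥ y₁ ⨯₃ y₂) : IsUnit d := by
  have hcoord : ∀ i, d ∣ w i := by
    intro i
    fin_cases i
    · simpa [cross_apply, vec3_dotProduct, vecHead, vecTail] using hd ![0, 1, 0] ![0, 0, 1]
    · simpa [cross_apply, vec3_dotProduct, vecHead, vecTail] using hd ![0, 0, 1] ![1, 0, 0]
    · simpa [cross_apply, vec3_dotProduct, vecHead, vecTail] using hd ![1, 0, 0] ![0, 1, 0]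
  exact isUnit_of_dvd_one (ha ▸ Finset.dvd_sum fun i _ => (hcoord i).mul_left (a i))

theorem exists_isUnit_cross_basis_eq_smul {Z : Submodule A (Fin 3 → A)}
    (hZ : ∀ z, z ∈ Z ↔ w ⬝ᵥ z = 0) (ha : a ⬝ᵥ w = 1) (b : Module.Basis (Fin 2) A Z) :
    ∃ d : A, IsUnit d ∧ (b 0 : Fin 3 → A) ⨯₃ b 1 = d • w :=
  ⟨_, isUnit_of_forall_dvd_dotProduct_cross ha (dvd_dotProduct_cross_of_basis hZ ha b),
    cross_eq_smul_of_dotProduct_eq_zero ha ((hZ _).mp (b 0).2) ((hZ _).mp (b 1).2)⟩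

theorem exists_basis_of_cross_eq_smul {Z : Submodule A (Fin 3 → A)}
    (hZ : ∀ z ∈ Z, w ⬝ᵥ z = 0) (ha : a ⬝ᵥ w = 1) {u v : Fin 3 → A} {c : A} (hu : u ∈ Z)
    (hv : v ∈ Z) (hc : IsUnit c) (h : u ⨯₃ v = c • w) :
    ∃ b : Module.Basis (Fin 2) A Z, b 0 = ⟨u, hu⟩ ∧ b 1 = ⟨v, hv⟩ := by
  have hli : LinearIndependent A ![(⟨u, hu⟩ : Z), ⟨v, hv⟩] := by
    refine LinearIndependent.of_comp Z.subtype ?_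
    convert linearIndependent_pair_of_cross_eq_smul ha hc h using 1
    ext i : 1
    fin_cases i <;> rfl
  have hsp : ⊤ ≤ Submodule.span A (Set.range ![(⟨u, hu⟩ : Z), ⟨v, hv⟩]) := by
    rintro z -
    obtain ⟨s, t, hst⟩ := Submodule.mem_span_pair.mp
      (mem_span_pair_of_cross_eq_smul ha hc h (hZ z z.2))
    rw [range_cons_cons_empty, Submodule.mem_span_pair]
    exact ⟨s, t, Subtype.ext hst⟩
  exact ⟨Module.Basis.mk hli hsp, Module.Basis.mk_apply .., Module.Basis.mk_apply ..⟩

theorem vec3_cross_eq_smul_iff (p₁ q₁ r₁ p₂ q₂ r₂ c x y z : A) :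
    ![p₁, q₁, r₁] ⨯₃ ![p₂, q₂, r₂] = c • ![x, y, z] ↔
      q₁ * r₂ - q₂ * r₁ = c * x ∧ p₂ * r₁ - p₁ * r₂ = c * y ∧ p₁ * q₂ - p₂ * q₁ = c * z := by
  simp [cross_apply, mul_comm]

end CrossProduct

theorem mem_syzygyModule_iff {K : Type*} [Field K] {P Q R : K[X]} (v : Fin 3 → K[X]) :
    v ∈ syzygyModule P Q R ↔ ![P, Q, R] ⬝ᵥ v = 0 := by
  rw [vec3_dotProduct]
  simp [syzygyModule]

theorem basis_iff_cross_product_scalar_multiple {K : Type*} [Field K]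
    (P Q R p₁ q₁ r₁ p₂ q₂ r₂ : K[X])
    (hcop : ∀ d : K[X], d ∣ P → d ∣ Q → d ∣ R → IsUnit d)
    (h₁ : (![p₁, q₁, r₁] : Fin 3 → K[X]) ∈ syzygyModule P Q R)
    (h₂ : (![p₂, q₂, r₂] : Fin 3 → K[X]) ∈ syzygyModule P Q R) :
    (∃ b : Module.Basis (Fin 2) K[X] (syzygyModule P Q R),
        b 0 = ⟨![p₁, q₁, r₁], h₁⟩ ∧ b 1 = ⟨![p₂, q₂, r₂], h₂⟩)
      ↔ ∃ c : K, c ≠ 0 ∧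
          q₁ * r₂ - q₂ * r₁ = C c * P ∧
          p₂ * r₁ - p₁ * r₂ = C c * Q ∧
          p₁ * q₂ - p₂ * q₁ = C c * R := by
  obtain ⟨a, ha⟩ : ∃ a, a ⬝ᵥ ![P, Q, R] = 1 :=
    exists_dotProduct_eq_one_of_forall_dvd_imp_isUnit fun d hd => hcop d (hd 0) (hd 1) (hd 2)
  simp_rw [← vec3_cross_eq_smul_iff]
  constructor
  · rintro ⟨b, hb₀, hb₁⟩
    obtain ⟨d, hd, hcross⟩ := exists_isUnit_cross_basis_eq_smul mem_syzygyModule_iff ha b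
    obtain ⟨c, hc, rfl⟩ := Polynomial.isUnit_iff.mp hd
    rw [hb₀, hb₁] at hcross
    exact ⟨c, hc.ne_zero, hcross⟩
  · rintro ⟨c, hc, hcross⟩
    exact exists_basis_of_cross_eq_smul (fun z => (mem_syzygyModule_iff z).mp) ha h₁ h₂
      (isUnit_C.mpr hc.isUnit) hcross
end

section
/- The two syzygies S₁ = (G₈, 0, −x²) and S₂ = ((s+1)(3(s+1)x² − 4sx − 4s), −1, −8s(x+1)) between the polynomials x², P₈, G₈ form a basis of the ℚ(s)[x]-module of syzygies; equivalently, their cross product (q₁r₂ − q₂r₁, p₂r₁ − p₁r₂, p₁q₂ − p₂q₁) is a nonzero ℚ(s)-multiple of (x², P₈, G₈). -/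
/-!
If `P` and `R` are coprime and `Q = A * P + B * R`, a syzygy `v` of `(P, Q, R)` satisfies
`P * (v₀ + A v₁) + R * (v₂ + B v₁) = 0`, so coprimality gives `c` with `v₀ + A v₁ = c R` and
`v₂ + B v₁ = -c P`, i.e. `v = c • (R, 0, -P) - v₁ • (A, -1, B)`; the same Bezout identity makes
these two syzygies independent. Here `P = x²`, `R = G₈` (coprime since `G₈(0) = -s ≠ 0`) and
`P₈ = p₂ x² + r₂ G₈`, and the cross product of the two basis vectors is `-(x², P₈, G₈)`.
-/

open Polynomial

theorem IsCoprime.exists_eq_mul_of_mul_add_mul_eq_zero {R : Type*} [CommRing R] {P Q x y : R}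
    (h : IsCoprime P Q) (hxy : P * x + Q * y = 0) : ∃ c, x = Q * c ∧ y = -(P * c) := by
  obtain ⟨u, v, huv⟩ := h
  exact ⟨v * x - u * y, by linear_combination (-x) * huv + u * hxy,
    by linear_combination (-y) * huv + v * hxy⟩

theorem Polynomial.isCoprime_X_pow_of_coeff_zero_ne_zero {K : Type*} [Field K] {G : K[X]}
    (hG : G.coeff 0 ≠ 0) (n : ℕ) : IsCoprime (X ^ n) G :=
  (irreducible_X.coprime_iff_not_dvd.2 (by rwa [X_dvd_iff])).pow_left

theorem mem_syzygyModule {K : Type*} [Field K] {P Q R : K[X]} {v : Fin 3 → K[X]} :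
    v ∈ syzygyModule P Q R ↔ P * v 0 + Q * v 1 + R * v 2 = 0 := by
  simp [syzygyModule, smul_eq_mul]

namespace syzygyModule

variable {K : Type*} [Field K] {P Q R A B : K[X]}

theorem koszul_mem : ![R, 0, -P] ∈ syzygyModule P Q R := by
  show P * R + Q * 0 + R * -P = 0
  ring

theorem mem_of_eq_mul_add_mul (hQ : Q = A * P + B * R) :
    ![A, -1, B] ∈ syzygyModule P Q R := by
  show P * A + Q * -1 + R * B = 0
  linear_combination -hQ

noncomputable def koszulPair (hQ : Q = A * P + B * R) : Fin 2 → syzygyModule P Q R :=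
  ![⟨![R, 0, -P], koszul_mem⟩, ⟨![A, -1, B], mem_of_eq_mul_add_mul hQ⟩]

theorem linearIndependent_koszulPair (hPR : IsCoprime P R) (hQ : Q = A * P + B * R) :
    LinearIndependent K[X] (koszulPair hQ) := by
  rw [koszulPair, LinearIndependent.pair_iff]
  intro a b hab
  obtain ⟨haR, hb, haP⟩ : a * R + b * A = 0 ∧ b = 0 ∧ a * P = b * B := by
    simpa [funext_iff, Fin.forall_fin_succ, neg_add_eq_zero] using congrArg Subtype.val hab
  subst hb
  obtain ⟨u, v, huv⟩ := hPR
  exact ⟨by linear_combination (-a) * huv + u * haP + v * haR, rfl⟩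

theorem span_koszulPair_eq_top (hPR : IsCoprime P R) (hQ : Q = A * P + B * R) :
    ⊤ ≤ Submodule.span K[X] (Set.range (koszulPair hQ)) := by
  rintro ⟨v, hv⟩ -
  rw [mem_syzygyModule, hQ] at hv
  obtain ⟨c, hc₀, hc₂⟩ := hPR.exists_eq_mul_of_mul_add_mul_eq_zero
    (x := v 0 + A * v 1) (y := v 2 + B * v 1) (by linear_combination hv)
  rw [koszulPair, Matrix.range_cons, Matrix.range_cons, Matrix.range_empty, Set.union_empty,
    Set.singleton_union, Submodule.mem_span_pair]
  refine ⟨c, -v 1, Subtype.ext (funext fun i => ?_)⟩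
  fin_cases i
  · show c * R + -v 1 * A = v 0
    linear_combination -hc₀
  · show c * 0 + -v 1 * -1 = v 1
    ring
  · show c * -P + -v 1 * B = v 2
    linear_combination -hc₂

noncomputable def basisOfIsCoprime (hPR : IsCoprime P R) (hQ : Q = A * P + B * R) :
    Module.Basis (Fin 2) K[X] (syzygyModule P Q R) :=
  .mk (linearIndependent_koszulPair hPR hQ) (span_koszulPair_eq_top hPR hQ)

theorem coe_basisOfIsCoprime (hPR : IsCoprime P R) (hQ : Q = A * P + B * R) :
    ⇑(basisOfIsCoprime hPR hQ) = koszulPair hQ :=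
  Module.Basis.coe_mk _ _

end syzygyModule

theorem S1_S2_basis_of_syzygies_x2_P8_G8 :
    let s : (RatFunc ℚ)[X] := C RatFunc.X
    let x : (RatFunc ℚ)[X] := X
    let G₈ : (RatFunc ℚ)[X] := x^2 - 2*s*x - s
    let P₈ : (RatFunc ℚ)[X] :=
      3*(s+1)^2*x^4 - 4*s*(s+3)*x^3 + 12*s*(s-1)*x^2 + 24*s^2*x + 8*s^2
    let p₁ : (RatFunc ℚ)[X] := G₈
    let q₁ : (RatFunc ℚ)[X] := 0
    let r₁ : (RatFunc ℚ)[X] := -x^2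
    let p₂ : (RatFunc ℚ)[X] := (s+1)*(3*(s+1)*x^2 - 4*s*x - 4*s)
    let q₂ : (RatFunc ℚ)[X] := -1
    let r₂ : (RatFunc ℚ)[X] := -8*s*(x+1)
    (∃ (h₁ : (![p₁, q₁, r₁] : Fin 3 → (RatFunc ℚ)[X]) ∈ syzygyModule (x^2) P₈ G₈)
        (h₂ : (![p₂, q₂, r₂] : Fin 3 → (RatFunc ℚ)[X]) ∈ syzygyModule (x^2) P₈ G₈)
        (b : Module.Basis (Fin 2) ((RatFunc ℚ)[X]) (syzygyModule (x^2) P₈ G₈)),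
        b 0 = ⟨![p₁, q₁, r₁], h₁⟩ ∧ b 1 = ⟨![p₂, q₂, r₂], h₂⟩)
    ∧ ∃ c : RatFunc ℚ, c ≠ 0 ∧
        q₁ * r₂ - q₂ * r₁ = C c * x^2 ∧
        p₂ * r₁ - p₁ * r₂ = C c * P₈ ∧
        p₁ * q₂ - p₂ * q₁ = C c * G₈ := by
  intro s x G₈ P₈ p₁ q₁ r₁ p₂ q₂ r₂
  have hcop : IsCoprime (x ^ 2) G₈ :=
    isCoprime_X_pow_of_coeff_zero_ne_zero (by simp [G₈, s, x, RatFunc.X_ne_zero]) 2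
  have hP₈ : P₈ = p₂ * x ^ 2 + r₂ * G₈ := by simp only [P₈, p₂, r₂, G₈]; ring
  refine ⟨⟨syzygyModule.koszul_mem, syzygyModule.mem_of_eq_mul_add_mul hP₈,
    syzygyModule.basisOfIsCoprime hcop hP₈, ?_, ?_⟩, -1, by norm_num, ?_, ?_, ?_⟩
  · rw [syzygyModule.coe_basisOfIsCoprime]; rfl
  · rw [syzygyModule.coe_basisOfIsCoprime]; rfl
  all_goals simp only [map_neg, map_one, neg_one_mul, p₁, q₁, r₁, q₂]
  · ring
  · linear_combination hP₈
  · ring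
end
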